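/- The total power consumption admits a per-sensor decomposition: if F_{i,j} is the flow on link (i,j), e_{i,j} is the link energy cost per bit, Γ_i is the data generated at sensor i, and flows are conserved (F = Γ + AᵀF with nilpotent A), then ∑_{i,j} e_{i,j} F_{i,j} = ∑_i g_i Γ_i, where g_i = ∑_{paths k from i} π_k ē_k is the power coefficient of sensor i. -/
import Mathlib


open Matrix

/-- Per-sensor decomposition of the total power: the link-based sum
`∑_{i,j} e_{i,j} F_{i,j}` (with `F_{i,j} = s_{i,j} Fᵢ`) equals the
source-based sum `∑ᵢ gᵢ Γᵢ`, where the power coefficient `g` (the expected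
path cost, `gᵢ = ∑ₖ πₖ ēₖ`) is characterized by the recursion
`gᵢ = ∑_j s_{i,j} e_{i,j} + ∑_{j sensor} s_{i,j} g_j`. -/
theorem total_power_per_sensor_decomposition
    {N M : ℕ} (S : Matrix (Fin N) (Fin (N + M)) ℝ)
    (hrange : ∀ i j, S i j ∈ Set.Icc (0 : ℝ) 1)
    (hrow : ∀ i, ∑ j, S i j = 1)
    (A : Matrix (Fin N) (Fin N) ℝ)
    (hA : A = Matrix.of fun i j => S i (Fin.castAdd M j))
    (hnil : A ^ N = 0)
    (e : Fin N → Fin (N + M) → ℝ) (he : ∀ i j, 0 ≤ e i j)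
    (Γ : Fin N → ℝ) (hΓ : ∀ i, 0 ≤ Γ i)
    (F : Fin N → ℝ) (hF : F = Γ + (Aᵀ).mulVec F)
    (g : Fin N → ℝ)
    (hg : ∀ i, g i = (∑ j, S i j * e i j) + ∑ j : Fin N, A i j * g j) :
    ∑ i, ∑ j, e i j * (S i j * F i) = ∑ i, g i * Γ i := by
  have hΓ' : ∀ i, Γ i = F i - ∑ j, A j i * F j := by
    intro i
    have := congrFun hF i
    simp only [Pi.add_apply, mulVec, dotProduct, transpose_apply] at this
    linarith
  calc ∑ i, ∑ j, e i j * (S i j * F i)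
      = ∑ i, (∑ j, S i j * e i j) * F i := by
        refine Finset.sum_congr rfl fun i _ => ?_
        rw [Finset.sum_mul]
        refine Finset.sum_congr rfl fun j _ => by ring
    _ = ∑ i, (g i - ∑ j : Fin N, A i j * g j) * F i := by
        refine Finset.sum_congr rfl fun i _ => ?_
        rw [hg i]; ring_nf
    _ = ∑ i, g i * F i - ∑ i, ∑ j : Fin N, A i j * g j * F i := by
        rw [← Finset.sum_sub_distrib]
        refine Finset.sum_congr rfl fun i _ => ?_
        rw [sub_mul, Finset.sum_mul]
    _ = ∑ i, g i * F i - ∑ j, ∑ i : Fin N, A i j * g j * F i := by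
        rw [Finset.sum_comm]
    _ = ∑ i, g i * Γ i := by
        rw [← Finset.sum_sub_distrib]
        refine Finset.sum_congr rfl fun i _ => ?_
        rw [hΓ' i, mul_sub, Finset.mul_sum]
        congr 1
        refine Finset.sum_congr rfl fun j _ => by ring
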